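/- Oscillation bound under focusing: let T be a positive bounded linear operator on an ordered Banach space with monotonic norm satisfying the focusing property with e ∈ X⁺ (‖e‖ = 1) and constant κ ≥ 1. Let w ∈ X⁺ with ‖w‖ = 1 and let ρ := ‖Tw‖. Then for every u ∈ X⁺ with ‖u‖ = 1, osc(Tu/Tw) ≤ (κ − 1/κ) · β(u)/β(w) ≤ (κ² − 1) · ‖T‖/ρ, where β(u), β(w) are focusing constants with β(u)e ≤ Tu ≤ κβ(u)e and β(w)e ≤ Tw ≤ κβ(w)e. -/
import Mathlib


open scoped Topology
open Filter

variable {X : Type*} [NormedAddCommGroup X] [NormedSpace ℝ X]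

/-- `x ≤ y` with respect to the cone `C`. -/
def coneLe (C : Set X) (x y : X) : Prop := y - x ∈ C

/-- `C` is a cone: closed, convex, closed under nonnegative scaling, and pointed. -/
def IsPaperCone (C : Set X) : Prop :=
  IsClosed C ∧ Convex ℝ C ∧ (∀ (a : ℝ) (u : X), 0 ≤ a → u ∈ C → a • u ∈ C) ∧
    (∀ u : X, u ∈ C → -u ∈ C → u = 0)

/-- `u` and `v` are comparable: `α • v ≤ u ≤ β • v` for some positive `α`, `β`. -/
def comparable (C : Set X) (u v : X) : Prop :=
  ∃ α β : ℝ, 0 < α ∧ 0 < β ∧ coneLe C (α • v) u ∧ coneLe C u (β • v)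

/-- `m(u/v) = sup {α : α • v ≤ u}`. -/
noncomputable def mRatio (C : Set X) (u v : X) : ℝ := sSup {α : ℝ | coneLe C (α • v) u}

/-- `M(u/v) = inf {α : u ≤ α • v}`. -/
noncomputable def MRatio (C : Set X) (u v : X) : ℝ := sInf {α : ℝ | coneLe C u (α • v)}

/-- The projective (Hilbert) distance `d(u,v) = ln (M(u/v)/m(u/v))`. -/
noncomputable def projDist (C : Set X) (u v : X) : ℝ :=
  Real.log (MRatio C u v / mRatio C u v)

/-- The oscillation `osc(u/v) = M(u/v) - m(u/v)`. -/
noncomputable def oscR (C : Set X) (u v : X) : ℝ := MRatio C u v - mRatio C u v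

lemma cone_add {C : Set X} (hC : IsPaperCone C) {a b : X} (ha : a ∈ C) (hb : b ∈ C) :
    a + b ∈ C := by
  have h := hC.2.1 ha hb (by norm_num : (0:ℝ) ≤ 1/2) (by norm_num : (0:ℝ) ≤ 1/2) (by norm_num)
  have h2 := hC.2.2.1 2 _ (by norm_num) h
  convert h2 using 1
  module

lemma coneLe_trans {C : Set X} (hC : IsPaperCone C) {x y z : X}
    (h1 : coneLe C x y) (h2 : coneLe C y z) : coneLe C x z := by
  have h := cone_add hC h1 h2
  unfold coneLe at *
  convert h using 1
  abel

lemma coneLe_smul {C : Set X} (hC : IsPaperCone C) {x y : X} {a : ℝ} (ha : 0 ≤ a)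
    (h : coneLe C x y) : coneLe C (a • x) (a • y) := by
  have h2 := hC.2.2.1 a _ ha h
  unfold coneLe at *
  convert h2 using 1
  module

lemma coneLe_smul_neg {C : Set X} (hC : IsPaperCone C) {x y : X} {a : ℝ} (ha : a ≤ 0)
    (h : coneLe C x y) : coneLe C (a • y) (a • x) := by
  have h2 := hC.2.2.1 (-a) _ (by linarith) h
  unfold coneLe at *
  convert h2 using 1
  module

/-- oscillation bound under focusing. -/
theorem osc_bound_under_focusing (C : Set X) (hC : IsPaperCone C)
    (hmono : ∀ x y : X, x ∈ C → coneLe C x y → ‖x‖ ≤ ‖y‖)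
    (T : X →L[ℝ] X) (hT : ∀ x ∈ C, T x ∈ C)
    (e : X) (he : e ∈ C) (hne : ‖e‖ = 1) (κ : ℝ) (hκ : 1 ≤ κ)
    (hfoc : ∀ z : X, z ∈ C → z ≠ 0 →
      ∃ β : ℝ, 0 < β ∧ coneLe C (β • e) (T z) ∧ coneLe C (T z) ((κ * β) • e))
    (u w : X) (hu : u ∈ C) (hnu : ‖u‖ = 1) (hw : w ∈ C) (hnw : ‖w‖ = 1)
    (βu βw : ℝ) (hβu : 0 < βu) (hβw : 0 < βw)
    (hu1 : coneLe C (βu • e) (T u)) (hu2 : coneLe C (T u) ((κ * βu) • e))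
    (hw1 : coneLe C (βw • e) (T w)) (hw2 : coneLe C (T w) ((κ * βw) • e)) :
    oscR C (T u) (T w) ≤ (κ - κ⁻¹) * (βu / βw) ∧
      (κ - κ⁻¹) * (βu / βw) ≤ (κ ^ 2 - 1) * ‖T‖ / ‖T w‖ := by

  have hκ0 : (0:ℝ) < κ := lt_of_lt_of_le one_pos hκ
  have hTw : T w ∈ C := hT w hw
  have hTu : T u ∈ C := hT u hu
  have hbue : βu • e ∈ C := hC.2.2.1 βu e hβu.le he
  have hnorm_smul : ∀ a : ℝ, 0 ≤ a → ‖a • e‖ = a := fun a ha => by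
    rw [norm_smul, hne, Real.norm_eq_abs, abs_of_nonneg ha, mul_one]
  -- ‖T w‖ bounds
  have hTwlow : βw ≤ ‖T w‖ := by
    have := hmono (βw • e) (T w) (hC.2.2.1 βw e hβw.le he) hw1
    rwa [hnorm_smul βw hβw.le] at this
  have hTwpos : 0 < ‖T w‖ := lt_of_lt_of_le hβw hTwlow
  have hTwhigh : ‖T w‖ ≤ κ * βw := by
    have := hmono (T w) ((κ * βw) • e) hTw hw2
    rwa [hnorm_smul (κ * βw) (by positivity)] at this
  have hβuT : βu ≤ ‖T‖ := by
    have h1 := hmono (βu • e) (T u) hbue hu1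
    rw [hnorm_smul βu hβu.le] at h1
    calc βu ≤ ‖T u‖ := h1
      _ ≤ ‖T‖ * ‖u‖ := T.le_opNorm u
      _ = ‖T‖ := by rw [hnu, mul_one]
  -- key cone inequalities
  have hA : coneLe C (T u) ((κ * βu / βw) • T w) := by
    refine coneLe_trans hC hu2 ?_
    have := coneLe_smul hC (a := κ * βu / βw) (by positivity) hw1
    rwa [smul_smul, div_mul_cancel₀ _ (ne_of_gt hβw)] at this
  have hB : coneLe C ((βu / (κ * βw)) • T w) (T u) := by
    refine coneLe_trans hC ?_ hu1
    have := coneLe_smul hC (a := βu / (κ * βw)) (by positivity) hw2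
    rwa [smul_smul, div_mul_cancel₀ _ (by positivity : κ * βw ≠ 0)] at this
  -- e ≠ 0 style arguments packaged: show elements of MRatio set are nonneg
  have hbddBelow : ∀ α : ℝ, coneLe C (T u) (α • T w) → 0 ≤ α := by
    intro α hα
    by_contra hneg
    push_neg at hneg
    have h1 : coneLe C (α • T w) ((α * βw) • e) := by
      have := coneLe_smul_neg hC (le_of_lt hneg) hw1
      rwa [smul_smul] at this
    have h2 : coneLe C (βu • e) ((α * βw) • e) :=
      coneLe_trans hC (coneLe_trans hC hu1 hα) h1
    have h3 : (α * βw - βu) • e ∈ C := by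
      have : (α * βw) • e - βu • e = (α * βw - βu) • e := by module
      rw [← this]; exact h2
    have h4 : -((α * βw - βu) • e) ∈ C := by
      have : -((α * βw - βu) • e) = (βu - α * βw) • e := by module
      rw [this]
      exact hC.2.2.1 _ e (by nlinarith) he
    have h5 := hC.2.2.2 _ h3 h4
    have h6 : α * βw - βu ≠ 0 := by nlinarith
    have := (smul_eq_zero.mp h5).resolve_left h6
    rw [this, norm_zero] at hne
    norm_num at hne
  have hbddAbove : ∀ α : ℝ, coneLe C (α • T w) (T u) → α ≤ κ * βu / βw := by
    intro α hα
    rcases le_or_gt α 0 with h | h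
    · exact le_trans h (by positivity)
    · have h1 : coneLe C ((α * βw) • e) (α • T w) := by
        have := coneLe_smul hC h.le hw1
        rwa [smul_smul] at this
      have h2 : coneLe C ((α * βw) • e) ((κ * βu) • e) :=
        coneLe_trans hC (coneLe_trans hC h1 hα) hu2
      have h3 := hmono _ _ (hC.2.2.1 _ e (by positivity) he) h2
      rw [hnorm_smul _ (by positivity), hnorm_smul _ (by positivity)] at h3
      rw [le_div_iff₀ hβw]
      linarith
  have hM : MRatio C (T u) (T w) ≤ κ * βu / βw := by
    apply csInf_le
    · exact ⟨0, fun α hα => hbddBelow α hα⟩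
    · exact hA
  have hm : βu / (κ * βw) ≤ mRatio C (T u) (T w) := by
    apply le_csSup
    · exact ⟨κ * βu / βw, fun α hα => hbddAbove α hα⟩
    · exact hB
  constructor
  · have : (κ - κ⁻¹) * (βu / βw) = κ * βu / βw - βu / (κ * βw) := by
      field_simp
    rw [oscR, this]
    linarith
  · have hκ2 : (0:ℝ) ≤ κ ^ 2 - 1 := by nlinarith
    have hkey : βu / (κ * βw) ≤ ‖T‖ / ‖T w‖ := by
      rw [div_le_div_iff₀ (by positivity) hTwpos]
      nlinarith [norm_nonneg (T w), hβu.le]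
    have : (κ - κ⁻¹) * (βu / βw) = (κ ^ 2 - 1) * (βu / (κ * βw)) := by
      have h1 : κ - κ⁻¹ = (κ ^ 2 - 1) / κ := by
        field_simp
      rw [h1, div_mul_div_comm, mul_div_assoc]
    rw [this, mul_div_assoc]
    exact mul_le_mul_of_nonneg_left hkey hκ2
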